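/- arXiv:2504.15587 — 3 statements merged into one kernel-verified Lean document; each statement's English description precedes it below -/
import Mathlib

section
/- Let E be a real Hilbert space and f : E → ℝ a differentiable function whose gradient is L-Lipschitz for some L ≥ 0. Fix θ ∈ E, a step size α > 0, and σ ≥ 0. Let (Ω, 𝓕, P) be a probability space and G : Ω → E a square-integrable random vector with ∫ G dP = ∇f(θ) and ∫ ‖G − ∇f(θ)‖² dP ≤ σ². Define the random iterate θ' = θ − α·G. Then ∫ f(θ') dP ≤ f(θ) − α·(1 − Lα/2)·‖∇f(θ)‖² + (L α² σ²)/2. In particular, if α ≤ 1/L, then ∫ f(θ') dP ≤ f(θ) − (α/2)·‖∇f(θ)‖² + (L α² σ²)/2. -/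
open MeasureTheory

local notation "⟪" x ", " y "⟫" => @inner ℝ _ _ x y

/-- Quadratic bound (descent lemma) for functions with Lipschitz gradient. -/
lemma abs_sub_le_of_lipschitz_grad
    {E : Type*} [NormedAddCommGroup E] [InnerProductSpace ℝ E] [CompleteSpace E]
    (f : E → ℝ) (g : E → E) (L : ℝ) (hL : 0 ≤ L)
    (hdiff : ∀ x : E, HasGradientAt f (g x) x)
    (hlip : ∀ x y : E, ‖g x - g y‖ ≤ L * ‖x - y‖)
    (x y : E) :
    |f y - f x - ⟪g x, y - x⟫| ≤ L / 2 * ‖y - x‖ ^ 2 := by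
  set d := y - x with hd
  have hgc : Continuous g := by
    have : LipschitzWith L.toNNReal g := by
      apply LipschitzWith.of_dist_le_mul
      intro a b
      simpa [dist_eq_norm, Real.coe_toNNReal L hL] using hlip a b
    exact this.continuous
  have hderiv : ∀ t : ℝ, HasDerivAt (fun s : ℝ => f (x + s • d))
      ⟪g (x + t • d), d⟫ t := by
    intro t
    have h1 : HasDerivAt (fun s : ℝ => x + s • d) d t := by
      simpa using ((hasDerivAt_id t).smul_const d).const_add x
    have h2 := (hdiff (x + t • d)).hasFDerivAt.comp_hasDerivAt t h1
    convert h2 using 1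
    · rfl
    · rfl
    · rfl
    · simp
  have hcont : Continuous fun t : ℝ => ⟪g (x + t • d), d⟫ :=
    (hgc.comp (continuous_const.add (continuous_id.smul continuous_const))).inner
      continuous_const
  have hint : IntervalIntegrable (fun t : ℝ => ⟪g (x + t • d), d⟫) volume 0 1 :=
    hcont.intervalIntegrable 0 1
  have key : f y - f x = ∫ t in (0:ℝ)..1, ⟪g (x + t • d), d⟫ := by
    have := intervalIntegral.integral_eq_sub_of_hasDerivAt
      (fun t _ => hderiv t) hint
    simpa [hd] using this.symm
  have hc : ⟪g x, d⟫ = ∫ _t in (0:ℝ)..1, ⟪g x, d⟫ := by simp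
  have key2 : f y - f x - ⟪g x, d⟫
      = ∫ t in (0:ℝ)..1, ⟪g (x + t • d) - g x, d⟫ := by
    rw [key, hc, ← intervalIntegral.integral_sub hint intervalIntegrable_const]
    simp [inner_sub_left]
  rw [key2]
  have hb : ∀ᵐ t ∂(MeasureTheory.volume.restrict (Set.uIoc (0:ℝ) 1)),
      ‖⟪g (x + t • d) - g x, d⟫‖ ≤ L * ‖d‖ ^ 2 * t := by
    refine (ae_restrict_iff' measurableSet_uIoc).2 (Filter.Eventually.of_forall ?_)
    intro t ht
    rw [Set.uIoc_of_le zero_le_one] at ht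
    calc ‖⟪g (x + t • d) - g x, d⟫‖ ≤ ‖g (x + t • d) - g x‖ * ‖d‖ :=
          norm_inner_le_norm _ _
      _ ≤ (L * ‖(x + t • d) - x‖) * ‖d‖ := by gcongr; exact hlip _ _
      _ = L * ‖d‖ ^ 2 * t := by
          have : ‖(x + t • d) - x‖ = t * ‖d‖ := by
            simp [norm_smul, abs_of_nonneg ht.1.le]
          rw [this]; ring
  have hbint : IntervalIntegrable (fun t : ℝ => L * ‖d‖ ^ 2 * t) volume 0 1 :=
    (continuous_const.mul continuous_id).intervalIntegrable 0 1
  have hmain := intervalIntegral.norm_integral_le_abs_of_norm_le hb hbint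
  have hval : (∫ t in (0:ℝ)..1, L * ‖d‖ ^ 2 * t) = L / 2 * ‖d‖ ^ 2 := by
    rw [_root_.intervalIntegral.integral_const_mul]
    simp [_root_.integral_id]
    ring
  calc |∫ t in (0:ℝ)..1, ⟪g (x + t • d) - g x, d⟫|
      ≤ |∫ t in (0:ℝ)..1, L * ‖d‖ ^ 2 * t| := hmain
    _ = L / 2 * ‖d‖ ^ 2 := by
        rw [hval, abs_of_nonneg (by positivity)]

/-- One-step expected descent inequality for stochastic gradient descent
(from the proof of Theorem 6): if `f` has an `L`-Lipschitz gradient `g`, and `G` is an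
unbiased stochastic gradient at `θ` with variance at most `σ²`, then for `θ' = θ - α • G`,
`E[f θ'] ≤ f θ - α (1 - Lα/2) ‖g θ‖² + L α² σ² / 2`; in particular, if `α ≤ 1 / L`, then
`E[f θ'] ≤ f θ - (α/2) ‖g θ‖² + L α² σ² / 2`. -/
theorem sgd_one_step_expected_descent {Ω : Type*} [MeasurableSpace Ω]
    (P : Measure Ω) [IsProbabilityMeasure P]
    {E : Type*} [NormedAddCommGroup E] [InnerProductSpace ℝ E] [CompleteSpace E]
    (f : E → ℝ) (g : E → E) (L : ℝ) (hL : 0 ≤ L)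
    (hdiff : ∀ x : E, HasGradientAt f (g x) x)
    (hlip : ∀ x y : E, ‖g x - g y‖ ≤ L * ‖x - y‖)
    (θ : E) (α : ℝ) (hα : 0 < α) (σ : ℝ) (hσ : 0 ≤ σ)
    (G : Ω → E) (hG2 : MemLp G 2 P)
    (hmean : ∫ ω, G ω ∂P = g θ)
    (hvar : ∫ ω, ‖G ω - g θ‖ ^ 2 ∂P ≤ σ ^ 2) :
    (∫ ω, f (θ - α • G ω) ∂P
        ≤ f θ - α * (1 - L * α / 2) * ‖g θ‖ ^ 2 + L * α ^ 2 * σ ^ 2 / 2) ∧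
    (α ≤ 1 / L →
      ∫ ω, f (θ - α • G ω) ∂P
        ≤ f θ - α / 2 * ‖g θ‖ ^ 2 + L * α ^ 2 * σ ^ 2 / 2) := by
  have hfc : Continuous f := by
    have : Differentiable ℝ f := fun x => (hdiff x).differentiableAt
    exact this.continuous
  have hG1 : Integrable G P := hG2.integrable one_le_two
  have hGsq : Integrable (fun ω => ‖G ω‖ ^ 2) P :=
    (memLp_two_iff_integrable_sq_norm hG2.1).1 hG2
  have hinner : Integrable (fun ω => ⟪g θ, G ω⟫) P := hG1.const_inner (g θ)
  -- pointwise bound from the descent lemma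
  have hpt : ∀ ω, |f (θ - α • G ω) - f θ + α * ⟪g θ, G ω⟫|
      ≤ L / 2 * α ^ 2 * ‖G ω‖ ^ 2 := by
    intro ω
    have h := abs_sub_le_of_lipschitz_grad f g L hL hdiff hlip θ (θ - α • G ω)
    have h1 : (θ - α • G ω) - θ = -(α • G ω) := by abel
    rw [h1] at h
    have h2 : ⟪g θ, -(α • G ω)⟫ = -(α * ⟪g θ, G ω⟫) := by
      rw [inner_neg_right, real_inner_smul_right]
    rw [h2] at h
    have h3 : ‖-(α • G ω)‖ ^ 2 = α ^ 2 * ‖G ω‖ ^ 2 := by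
      rw [norm_neg, norm_smul]
      simp [abs_of_pos hα, mul_pow]
    rw [h3] at h
    calc |f (θ - α • G ω) - f θ + α * ⟪g θ, G ω⟫|
        = |f (θ - α • G ω) - f θ - -(α * ⟪g θ, G ω⟫)| := by ring_nf
      _ ≤ L / 2 * (α ^ 2 * ‖G ω‖ ^ 2) := h
      _ = L / 2 * α ^ 2 * ‖G ω‖ ^ 2 := by ring
  -- integrability of f ∘ (θ - α • G)
  have hmeas : AEStronglyMeasurable (fun ω => f (θ - α • G ω)) P :=
    hfc.comp_aestronglyMeasurable ((aestronglyMeasurable_const.sub (hG2.1.const_smul α)))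
  have hfint : Integrable (fun ω => f (θ - α • G ω)) P := by
    have hb : Integrable
        (fun ω => |f θ| + α * |⟪g θ, G ω⟫| + L / 2 * α ^ 2 * ‖G ω‖ ^ 2) P :=
      ((integrable_const _).add (hinner.abs.const_mul α)).add (hGsq.const_mul _)
    refine Integrable.mono hb hmeas (Filter.Eventually.of_forall fun ω => ?_)
    have h1 := hpt ω
    have hge : (0:ℝ) ≤ |f θ| + α * |⟪g θ, G ω⟫| + L / 2 * α ^ 2 * ‖G ω‖ ^ 2 := by positivity
    rw [Real.norm_eq_abs, Real.norm_eq_abs, abs_of_nonneg hge]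
    rw [abs_le] at h1
    rw [abs_le]
    have ha := le_abs_self (f θ)
    have hb' := neg_abs_le (f θ)
    have hc := le_abs_self (⟪g θ, G ω⟫ : ℝ)
    have hd := neg_abs_le (⟪g θ, G ω⟫ : ℝ)
    constructor
    · nlinarith [h1.1]
    · nlinarith [h1.2]
  -- expectation computations
  have hEinner : ∫ ω, ⟪g θ, G ω⟫ ∂P = ‖g θ‖ ^ 2 := by
    rw [integral_inner hG1, hmean, real_inner_self_eq_norm_sq]
  have hEsq : ∫ ω, ‖G ω‖ ^ 2 ∂P ≤ σ ^ 2 + ‖g θ‖ ^ 2 := by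
    have hGd : Integrable (fun ω => G ω - g θ) P := hG1.sub (integrable_const _)
    have hGd2 : MemLp (fun ω => G ω - g θ) 2 P := hG2.sub (memLp_const _)
    have hdsq : Integrable (fun ω => ‖G ω - g θ‖ ^ 2) P :=
      (memLp_two_iff_integrable_sq_norm hGd2.1).1 hGd2
    have hdin : Integrable (fun ω => ⟪g θ, G ω - g θ⟫) P := hGd.const_inner _
    have hexp : ∀ ω, ‖G ω‖ ^ 2
        = ‖G ω - g θ‖ ^ 2 + 2 * ⟪g θ, G ω - g θ⟫ + ‖g θ‖ ^ 2 := by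
      intro ω
      have h0 : G ω = (G ω - g θ) + g θ := by abel
      calc ‖G ω‖ ^ 2 = ‖(G ω - g θ) + g θ‖ ^ 2 := by rw [← h0]
        _ = ‖G ω - g θ‖ ^ 2 + 2 * ⟪G ω - g θ, g θ⟫ + ‖g θ‖ ^ 2 :=
            norm_add_sq_real _ _
        _ = ‖G ω - g θ‖ ^ 2 + 2 * ⟪g θ, G ω - g θ⟫ + ‖g θ‖ ^ 2 := by
            rw [real_inner_comm]
    calc ∫ ω, ‖G ω‖ ^ 2 ∂P
        = ∫ ω, (‖G ω - g θ‖ ^ 2 + 2 * ⟪g θ, G ω - g θ⟫ + ‖g θ‖ ^ 2) ∂P := by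
          exact integral_congr_ae (Filter.Eventually.of_forall hexp)
      _ = (∫ ω, ‖G ω - g θ‖ ^ 2 ∂P) + 2 * (∫ ω, ⟪g θ, G ω - g θ⟫ ∂P) + ‖g θ‖ ^ 2 := by
          have hA : Integrable (fun ω => ‖G ω - g θ‖ ^ 2 + 2 * ⟪g θ, G ω - g θ⟫) P :=
            hdsq.add (hdin.const_mul 2)
          have hB : Integrable (fun ω => 2 * ⟪g θ, G ω - g θ⟫) P := hdin.const_mul 2
          rw [integral_add hA (integrable_const _), integral_add hdsq hB,
            integral_const_mul, integral_const]
          simp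
      _ = (∫ ω, ‖G ω - g θ‖ ^ 2 ∂P) + ‖g θ‖ ^ 2 := by
          rw [integral_inner hGd]
          rw [integral_sub hG1 (integrable_const _), hmean, integral_const]
          simp
      _ ≤ σ ^ 2 + ‖g θ‖ ^ 2 := by linarith
  have hmain : ∫ ω, f (θ - α • G ω) ∂P
      ≤ f θ - α * (1 - L * α / 2) * ‖g θ‖ ^ 2 + L * α ^ 2 * σ ^ 2 / 2 := by
    have hub : ∫ ω, f (θ - α • G ω) ∂P
        ≤ ∫ ω, (f θ - α * ⟪g θ, G ω⟫ + L / 2 * α ^ 2 * ‖G ω‖ ^ 2) ∂P := by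
      refine integral_mono hfint
        (((integrable_const _).sub (hinner.const_mul α)).add (hGsq.const_mul _)) ?_
      intro ω
      have := hpt ω
      rw [abs_le] at this
      linarith [this.2]
    have heq : ∫ ω, (f θ - α * ⟪g θ, G ω⟫ + L / 2 * α ^ 2 * ‖G ω‖ ^ 2) ∂P
        = f θ - α * ‖g θ‖ ^ 2 + L / 2 * α ^ 2 * ∫ ω, ‖G ω‖ ^ 2 ∂P := by
      have hA : Integrable (fun ω => f θ - α * ⟪g θ, G ω⟫) P :=
        (integrable_const _).sub (hinner.const_mul α)
      have hB : Integrable (fun ω => L / 2 * α ^ 2 * ‖G ω‖ ^ 2) P := hGsq.const_mul _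
      have hC : Integrable (fun ω => α * ⟪g θ, G ω⟫) P := hinner.const_mul α
      rw [integral_add hA hB, integral_sub (integrable_const _) hC,
        integral_const_mul, integral_const_mul, hEinner, integral_const]
      simp
    rw [heq] at hub
    have : L / 2 * α ^ 2 * ∫ ω, ‖G ω‖ ^ 2 ∂P
        ≤ L / 2 * α ^ 2 * (σ ^ 2 + ‖g θ‖ ^ 2) := by
      apply mul_le_mul_of_nonneg_left hEsq (by positivity)
    calc ∫ ω, f (θ - α • G ω) ∂P
        ≤ f θ - α * ‖g θ‖ ^ 2 + L / 2 * α ^ 2 * (σ ^ 2 + ‖g θ‖ ^ 2) := by linarith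
      _ = f θ - α * (1 - L * α / 2) * ‖g θ‖ ^ 2 + L * α ^ 2 * σ ^ 2 / 2 := by ring
  refine ⟨hmain, fun hαL => ?_⟩
  rcases eq_or_lt_of_le hL with hL0 | hLpos
  · exact absurd hαL (by rw [← hL0]; simpa using hα)
  · have h1 : L * α ≤ 1 := by
      rw [le_div_iff₀ hLpos] at hαL; linarith
    have h2 : α * (1 - L * α / 2) * ‖g θ‖ ^ 2 ≥ α / 2 * ‖g θ‖ ^ 2 := by
      have hs : (0:ℝ) ≤ ‖g θ‖ ^ 2 := by positivity
      nlinarith [mul_nonneg (mul_nonneg hα.le hs) (sub_nonneg.2 h1)]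
    linarith
end

section
/- Let E be a real inner product space and f : E → ℝ a differentiable function whose gradient is L-Lipschitz for some L > 0, and which is μ-strongly convex for some 0 < μ ≤ L (i.e. x ↦ f(x) − (μ/2)·‖x‖² is convex) and attains its minimum at θ*. Define gradient-descent iterates θ_{k+1} = θ_k − (1/L)·∇f(θ_k) from θ_0. Then for every k, f(θ_k) − f(θ*) ≤ (1 − μ/L)^k · (f(θ_0) − f(θ*)). -/
open Set

section Aux

variable {E : Type*} [NormedAddCommGroup E] [InnerProductSpace ℝ E]

/-- First-order condition for a convex differentiable function. -/
lemma gd_convex_first_order {h : E → ℝ} (hconv : ConvexOn ℝ Set.univ h) {x : E} {φ : E →L[ℝ] ℝ}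
    (hd : HasFDerivAt h φ x) (y : E) : h x + φ (y - x) ≤ h y := by
  set ψ : ℝ → ℝ := fun t => h (x + t • (y - x)) with hψ
  have hψconv : ConvexOn ℝ Set.univ ψ := by
    have h1 := hconv.comp_affineMap (AffineMap.lineMap x y : ℝ →ᵃ[ℝ] E)
    have : (h ∘ (AffineMap.lineMap x y : ℝ →ᵃ[ℝ] E)) = ψ := by
      funext t
      simp [ψ, AffineMap.lineMap_apply, add_comm]
    simpa [this] using h1
  have hcurve : HasDerivAt (fun t : ℝ => x + t • (y - x)) (y - x) 0 := by
    simpa using ((hasDerivAt_id (0 : ℝ)).smul_const (y - x)).const_add x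
  have hψd : HasDerivAt ψ (φ (y - x)) 0 := by
    have hd' : HasFDerivAt h φ (x + (0 : ℝ) • (y - x)) := by simpa using hd
    exact hd'.comp_hasDerivAt 0 hcurve
  have hs := hψconv.le_slope_of_hasDerivAt (mem_univ (0 : ℝ)) (mem_univ (1 : ℝ)) one_pos hψd
  rw [slope_def_field] at hs
  have h0 : ψ 0 = h x := by simp [ψ]
  have h1 : ψ 1 = h y := by simp [ψ]
  rw [h0, h1] at hs
  have : φ (y - x) ≤ h y - h x := by simpa using hs
  linarith

/-- Descent lemma for `L`-Lipschitz gradient. -/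
lemma gd_descent_lemma (f : E → ℝ) (g : E → E) (L : ℝ)
    (hdiff : ∀ x : E, HasFDerivAt f (innerSL ℝ (g x)) x)
    (hlip : ∀ x y : E, ‖g x - g y‖ ≤ L * ‖x - y‖) (x y : E) :
    f y ≤ f x + (inner ℝ (g x) (y - x) : ℝ) + L / 2 * ‖y - x‖ ^ 2 := by
  set v := y - x with hv
  set χ : ℝ → ℝ := fun t => f (x + t • v) - (inner ℝ (g x) v : ℝ) * t - L * ‖v‖ ^ 2 / 2 * t ^ 2
    with hχ
  have hχd : ∀ t : ℝ, HasDerivAt χ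
      ((inner ℝ (g (x + t • v)) v : ℝ) - (inner ℝ (g x) v : ℝ) - L * ‖v‖ ^ 2 * t) t := by
    intro t
    have hcurve : HasDerivAt (fun s : ℝ => x + s • v) v t := by
      simpa using ((hasDerivAt_id t).smul_const v).const_add x
    have h1 : HasDerivAt (fun s : ℝ => f (x + s • v)) ((inner ℝ (g (x + t • v)) v : ℝ)) t := by
      exact (hdiff (x + t • v)).comp_hasDerivAt t hcurve
    have h2 : HasDerivAt (fun s : ℝ => (inner ℝ (g x) v : ℝ) * s) ((inner ℝ (g x) v : ℝ)) t := by
      simpa using (hasDerivAt_id t).const_mul ((inner ℝ (g x) v : ℝ))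
    have h3 : HasDerivAt (fun s : ℝ => L * ‖v‖ ^ 2 / 2 * s ^ 2) (L * ‖v‖ ^ 2 * t) t := by
      have := (hasDerivAt_pow 2 t).const_mul (L * ‖v‖ ^ 2 / 2)
      refine this.congr_deriv ?_
      ring
    exact (h1.sub h2).sub h3
  have hχanti : AntitoneOn χ (Icc (0 : ℝ) 1) := by
    apply antitoneOn_of_deriv_nonpos (convex_Icc 0 1)
    · exact fun t _ => ((hχd t).differentiableAt).continuousAt.continuousWithinAt
    · exact fun t _ => ((hχd t).differentiableAt).differentiableWithinAt
    · intro t ht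
      rw [interior_Icc] at ht
      rw [(hχd t).deriv]
      have hineq : (inner ℝ (g (x + t • v)) v : ℝ) - (inner ℝ (g x) v : ℝ) ≤ L * t * ‖v‖ ^ 2 := by
        have h1 : (inner ℝ (g (x + t • v)) v : ℝ) - (inner ℝ (g x) v : ℝ)
            = (inner ℝ (g (x + t • v) - g x) v : ℝ) := by rw [inner_sub_left]
        rw [h1]
        calc (inner ℝ (g (x + t • v) - g x) v : ℝ) ≤ ‖g (x + t • v) - g x‖ * ‖v‖ :=
              real_inner_le_norm _ _
          _ ≤ (L * ‖(x + t • v) - x‖) * ‖v‖ := by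
              gcongr; exact hlip _ _
          _ = L * (|t| * ‖v‖) * ‖v‖ := by rw [add_sub_cancel_left, norm_smul, Real.norm_eq_abs]
          _ = L * t * ‖v‖ ^ 2 := by rw [abs_of_pos ht.1]; ring
      nlinarith [ht.1.le]
  have := hχanti (Set.left_mem_Icc.2 zero_le_one) (Set.right_mem_Icc.2 zero_le_one) zero_le_one
  simp only [χ] at this
  have h0 : x + (0 : ℝ) • v = x := by simp
  have h1 : x + (1 : ℝ) • v = y := by simp [v]
  rw [h0, h1] at this
  simp only [mul_zero, mul_one, one_pow, sub_zero] at this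
  linarith

/-- Strong convexity first-order lower bound. -/
lemma gd_strong_lower (f : E → ℝ) (g : E → E)
    (hdiff : ∀ x : E, HasFDerivAt f (innerSL ℝ (g x)) x)
    (μ : ℝ)
    (hconv : ConvexOn ℝ Set.univ (fun x : E => f x - μ / 2 * ‖x‖ ^ 2)) (x y : E) :
    f x + (inner ℝ (g x) (y - x) : ℝ) + μ / 2 * ‖y - x‖ ^ 2 ≤ f y := by
  have hnsq : HasFDerivAt (fun z : E => ‖z‖ ^ 2) (2 • (innerSL ℝ x)) x :=
    (hasFDerivAt_id x).norm_sq
  have hd : HasFDerivAt (fun z : E => f z - μ / 2 * ‖z‖ ^ 2)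
      (innerSL ℝ (g x) - (μ / 2) • (2 • (innerSL ℝ x))) x :=
    (hdiff x).sub (hnsq.const_mul (μ / 2))
  have key := gd_convex_first_order hconv hd y
  simp only [ContinuousLinearMap.sub_apply, ContinuousLinearMap.smul_apply,
    ContinuousLinearMap.coe_smul', Pi.smul_apply, innerSL_apply_apply, smul_eq_mul, nsmul_eq_mul,
    Nat.cast_ofNat] at key
  have hexp : ‖y - x‖ ^ 2 = ‖y‖ ^ 2 - 2 * (inner ℝ x (y - x) : ℝ) - ‖x‖ ^ 2 := by
    have h1 : (inner ℝ x (y - x) : ℝ) = (inner ℝ x y : ℝ) - ‖x‖ ^ 2 := by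
      rw [inner_sub_right, real_inner_self_eq_norm_sq]
    have h2 : ‖y - x‖ ^ 2 = ‖y‖ ^ 2 - 2 * (inner ℝ y x : ℝ) + ‖x‖ ^ 2 := by
      rw [← real_inner_self_eq_norm_sq, ← real_inner_self_eq_norm_sq,
        ← real_inner_self_eq_norm_sq, inner_sub_sub_self, real_inner_comm x y]; ring
    rw [h1, h2, real_inner_comm]; ring
  rw [hexp]
  ring_nf
  ring_nf at key
  linarith

end Aux

/-- Linear convergence of gradient descent with step size `1 / L` for an `L`-smooth,
`μ`-strongly convex function (`0 < μ ≤ L`) with minimizer `θstar`: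
`f (θ k) - f θstar ≤ (1 - μ/L)^k (f (θ 0) - f θstar)`.
This underlies the `O(κ log(1/ε))` iteration complexity in Theorem 3. -/
theorem gd_linear_convergence {E : Type*} [NormedAddCommGroup E] [InnerProductSpace ℝ E]
    (f : E → ℝ) (g : E → E) (L : ℝ) (hL : 0 < L)
    (hdiff : ∀ x : E, HasFDerivAt f (innerSL ℝ (g x)) x)
    (hlip : ∀ x y : E, ‖g x - g y‖ ≤ L * ‖x - y‖)
    (μ : ℝ) (hμ0 : 0 < μ) (hμL : μ ≤ L)
    (hconv : ConvexOn ℝ Set.univ (fun x : E => f x - μ / 2 * ‖x‖ ^ 2))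
    (θstar : E) (hmin : ∀ x : E, f θstar ≤ f x)
    (θ : ℕ → E) (hθ : ∀ k : ℕ, θ (k + 1) = θ k - (1 / L) • g (θ k)) :
    ∀ k : ℕ, f (θ k) - f θstar ≤ (1 - μ / L) ^ k * (f (θ 0) - f θstar) := by
  -- Polyak–Łojasiewicz inequality
  have hPL : ∀ x : E, 2 * μ * (f x - f θstar) ≤ ‖g x‖ ^ 2 := by
    intro x
    have key := gd_strong_lower f g hdiff μ hconv x θstar
    have hcs : -(‖g x‖ * ‖θstar - x‖) ≤ (inner ℝ (g x) (θstar - x) : ℝ) := by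
      have h := abs_real_inner_le_norm (g x) (θstar - x)
      have := neg_abs_le (inner ℝ (g x) (θstar - x) : ℝ)
      linarith
    nlinarith [key, hcs, sq_nonneg (‖g x‖ - μ * ‖θstar - x‖), hμ0, sq_nonneg ‖θstar - x‖,
      mul_pos hμ0 hμ0]
  -- one-step decrease
  have hstep : ∀ k : ℕ, f (θ (k + 1)) - f θstar ≤ (1 - μ / L) * (f (θ k) - f θstar) := by
    intro k
    have hdes := gd_descent_lemma f g L hdiff hlip (θ k) (θ (k + 1))
    have h1 : θ (k + 1) - θ k = -((1 / L) • g (θ k)) := by rw [hθ k]; abel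
    rw [h1] at hdes
    have h2 : (inner ℝ (g (θ k)) (-((1 / L) • g (θ k))) : ℝ) = -(1 / L * ‖g (θ k)‖ ^ 2) := by
      rw [inner_neg_right, real_inner_smul_right, real_inner_self_eq_norm_sq]
    have h3 : ‖-((1 / L) • g (θ k))‖ ^ 2 = (1 / L) ^ 2 * ‖g (θ k)‖ ^ 2 := by
      rw [norm_neg, norm_smul, Real.norm_eq_abs, abs_of_pos (by positivity), mul_pow]
    rw [h2, h3] at hdes
    have h4 : L / 2 * ((1 / L) ^ 2 * ‖g (θ k)‖ ^ 2) = 1 / (2 * L) * ‖g (θ k)‖ ^ 2 := by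
      field_simp
    rw [h4] at hdes
    -- f (θ (k+1)) ≤ f (θ k) - 1/(2L) ‖g (θ k)‖²
    have hdec : f (θ (k + 1)) ≤ f (θ k) - 1 / (2 * L) * ‖g (θ k)‖ ^ 2 := by
      have : -(1 / L * ‖g (θ k)‖ ^ 2) + 1 / (2 * L) * ‖g (θ k)‖ ^ 2
          = -(1 / (2 * L) * ‖g (θ k)‖ ^ 2) := by field_simp; ring
      linarith
    have hPLk := hPL (θ k)
    have hfac : 1 / (2 * L) * (2 * μ * (f (θ k) - f θstar)) ≤ 1 / (2 * L) * ‖g (θ k)‖ ^ 2 :=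
      mul_le_mul_of_nonneg_left hPLk (by positivity)
    have hsimp : 1 / (2 * L) * (2 * μ * (f (θ k) - f θstar)) = μ / L * (f (θ k) - f θstar) := by
      field_simp
    rw [hsimp] at hfac
    have : f (θ (k + 1)) - f θstar ≤ (f (θ k) - f θstar) - μ / L * (f (θ k) - f θstar) := by
      linarith
    linarith [this]
  -- induction
  intro k
  induction k with
  | zero => simp
  | succ n ih =>
    have hρ : (0 : ℝ) ≤ 1 - μ / L := by
      have : μ / L ≤ 1 := (div_le_one hL).2 hμL
      linarith
    calc f (θ (n + 1)) - f θstar ≤ (1 - μ / L) * (f (θ n) - f θstar) := hstep n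
      _ ≤ (1 - μ / L) * ((1 - μ / L) ^ n * (f (θ 0) - f θstar)) :=
          mul_le_mul_of_nonneg_left ih hρ
      _ = (1 - μ / L) ^ (n + 1) * (f (θ 0) - f θstar) := by ring
end

section
/- Let E be a real Hilbert space and f : E → ℝ a differentiable function whose gradient is L-Lipschitz for some L > 0, which is μ-strongly convex for some 0 < μ ≤ L and attains its minimum value f* at θ*. Fix θ ∈ E, a step size α with 0 < α ≤ 1/L, and σ ≥ 0. Let G be a square-integrable random vector on a probability space with mean ∇f(θ) and ∫ ‖G − ∇f(θ)‖² dP ≤ σ², and set θ' = θ − α·G. Then ∫ f(θ') dP − f* ≤ (1 − αμ)·(f(θ) − f*) + (L α² σ²)/2. -/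
open MeasureTheory Set

local notation "⟪" x ", " y "⟫" => @inner ℝ _ _ x y

section helpers
variable {E : Type*} [NormedAddCommGroup E] [InnerProductSpace ℝ E] [CompleteSpace E]
variable {f : E → ℝ} {g : E → E}

lemma sgd_line_deriv (hdiff : ∀ x : E, HasGradientAt f (g x) x) (x v : E) (t : ℝ) :
    HasDerivAt (fun s : ℝ => f (x + s • v)) ⟪g (x + t • v), v⟫ t := by
  have hc : HasDerivAt (fun s : ℝ => x + s • v) v t := by
    simpa using ((hasDerivAt_id t).smul_const v).const_add x
  have hf := (hdiff (x + t • v)).hasFDerivAt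
  have h := hf.comp_hasDerivAt t hc
  simp [InnerProductSpace.toDual_apply_apply] at h
  exact h

lemma sgd_descent {L : ℝ} (hL : 0 < L)
    (hdiff : ∀ x : E, HasGradientAt f (g x) x)
    (hlip : ∀ x y : E, ‖g x - g y‖ ≤ L * ‖x - y‖) (x v : E) :
    f (x + v) ≤ f x + ⟪g x, v⟫ + L / 2 * ‖v‖ ^ 2 := by
  set c1 : ℝ := ⟪g x, v⟫ with hc1
  set c2 : ℝ := L / 2 * ‖v‖ ^ 2 with hc2
  set ψ : ℝ → ℝ := fun t => f (x + t • v) - t * c1 - c2 * t ^ 2 with hψdef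
  have hψ : ∀ t : ℝ, HasDerivAt ψ (⟪g (x + t • v), v⟫ - c1 - L * t * ‖v‖ ^ 2) t := by
    intro t
    have h := ((sgd_line_deriv hdiff x v t).sub ((hasDerivAt_id t).mul_const c1)).sub
      ((hasDerivAt_pow 2 t).const_mul c2)
    refine h.congr_deriv ?_
    simp [hc2]
    ring
  have hmono : AntitoneOn ψ (Icc (0:ℝ) 1) := by
    apply antitoneOn_of_deriv_nonpos (convex_Icc 0 1)
    · exact fun t _ => ((hψ t).differentiableAt).continuousAt.continuousWithinAt
    · intro t _
      exact ((hψ t).differentiableAt).differentiableWithinAt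
    · intro t ht
      rw [interior_Icc] at ht
      rw [(hψ t).deriv]
      have h1 : ⟪g (x + t • v) - g x, v⟫ ≤ ‖g (x + t • v) - g x‖ * ‖v‖ :=
        real_inner_le_norm _ _
      have h2 : ‖g (x + t • v) - g x‖ ≤ L * (t * ‖v‖) := by
        have := hlip (x + t • v) x
        simpa [norm_smul, abs_of_pos ht.1] using this
      have h3 : ⟪g (x + t • v) - g x, v⟫ = ⟪g (x + t • v), v⟫ - c1 := by
        rw [inner_sub_left]
      nlinarith [norm_nonneg v, mul_nonneg (norm_nonneg (g (x + t • v) - g x)) (norm_nonneg v),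
        ht.1.le]
  have h01 := hmono (left_mem_Icc.2 zero_le_one) (right_mem_Icc.2 zero_le_one) zero_le_one
  simp only [hψdef, zero_smul, add_zero, one_smul, zero_mul, mul_zero, sub_zero, one_pow,
    mul_one, one_mul] at h01
  linarith
end helpers

section helpers2
variable {E : Type*} [NormedAddCommGroup E] [InnerProductSpace ℝ E] [CompleteSpace E]
variable {f : E → ℝ} {g : E → E}

lemma sgd_strong_lb {μ : ℝ} (hμ0 : 0 < μ)
    (hdiff : ∀ x : E, HasGradientAt f (g x) x)
    (hconv : ConvexOn ℝ Set.univ (fun x : E => f x - μ / 2 * ‖x‖ ^ 2)) (x v : E) :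
    f x + ⟪g x, v⟫ + μ / 2 * ‖v‖ ^ 2 ≤ f (x + v) := by
  set φ : ℝ → ℝ := fun t => f (x + t • v) - μ / 2 * ‖x + t • v‖ ^ 2 with hφdef
  have hφconv : ConvexOn ℝ Set.univ φ := by
    refine ⟨convex_univ, ?_⟩
    intro t1 _ t2 _ a b ha hb hab
    have hb' : b = 1 - a := by linarith
    subst hb'
    have key : x + (a • t1 + (1 - a) • t2) • v
        = a • (x + t1 • v) + (1 - a) • (x + t2 • v) := by
      simp only [smul_eq_mul]
      module
    have h := hconv.2 (Set.mem_univ (x + t1 • v)) (Set.mem_univ (x + t2 • v)) ha hb hab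
    rw [← key] at h
    simpa only [smul_eq_mul] using h
  have hnorm : ∀ t : ℝ, ‖x + t • v‖ ^ 2 = ‖x‖ ^ 2 + 2 * ⟪x, v⟫ * t + ‖v‖ ^ 2 * t ^ 2 := by
    intro t
    rw [norm_add_sq_real, real_inner_smul_right, norm_smul]
    simp [mul_pow]
    ring
  have hφ' : HasDerivAt φ (⟪g x, v⟫ - μ * ⟪x, v⟫) 0 := by
    have hq : HasDerivAt (fun t : ℝ => μ / 2 * ‖x + t • v‖ ^ 2) (μ * ⟪x, v⟫) 0 := by
      have hpoly : HasDerivAt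
          (fun t : ℝ => μ / 2 * (‖x‖ ^ 2 + 2 * ⟪x, v⟫ * t + ‖v‖ ^ 2 * t ^ 2))
          (μ / 2 * (2 * ⟪x, v⟫ + ‖v‖ ^ 2 * (2 * 0))) 0 := by
        have h1 : HasDerivAt (fun t : ℝ => ‖x‖ ^ 2 + 2 * ⟪x, v⟫ * t + ‖v‖ ^ 2 * t ^ 2)
            (2 * ⟪x, v⟫ + ‖v‖ ^ 2 * (2 * 0)) 0 := by
          have := (((hasDerivAt_id (0:ℝ)).const_mul (2 * ⟪x, v⟫)).const_add (‖x‖ ^ 2)).add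
            ((hasDerivAt_pow 2 (0:ℝ)).const_mul (‖v‖ ^ 2))
          refine this.congr_deriv ?_
          simp
        exact h1.const_mul _
      have heq : (fun t : ℝ => μ / 2 * ‖x + t • v‖ ^ 2)
          = fun t : ℝ => μ / 2 * (‖x‖ ^ 2 + 2 * ⟪x, v⟫ * t + ‖v‖ ^ 2 * t ^ 2) := by
        funext t; rw [hnorm t]
      rw [heq]
      convert hpoly using 1
      ring
    have h0 : HasDerivAt (fun t : ℝ => f (x + t • v)) ⟪g x, v⟫ 0 := by
      have := sgd_line_deriv hdiff x v 0
      simpa using this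
    exact h0.sub hq
  have hslope := hφconv.le_slope_of_hasDerivAt (Set.mem_univ (0:ℝ)) (Set.mem_univ (1:ℝ))
    one_pos hφ'
  rw [slope_def_field] at hslope
  simp only [hφdef, zero_smul, add_zero, one_smul, div_one, sub_zero] at hslope
  have h1 := hnorm 1
  simp only [one_pow, mul_one, one_smul] at h1
  nlinarith [hslope, h1]

lemma sgd_pl {μ : ℝ} (hμ0 : 0 < μ)
    (hdiff : ∀ x : E, HasGradientAt f (g x) x)
    (hconv : ConvexOn ℝ Set.univ (fun x : E => f x - μ / 2 * ‖x‖ ^ 2))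
    {θstar : E} {fstar : ℝ} (hfstar : f θstar = fstar) (x : E) :
    2 * μ * (f x - fstar) ≤ ‖g x‖ ^ 2 := by
  set d : E := θstar - x with hd
  have h := sgd_strong_lb hμ0 hdiff hconv x d
  rw [hd, add_sub_cancel, hfstar] at h
  have hexp : ‖μ • d + g x‖ ^ 2
      = μ ^ 2 * ‖d‖ ^ 2 + 2 * (μ * ⟪d, g x⟫) + ‖g x‖ ^ 2 := by
    rw [norm_add_sq_real, real_inner_smul_left, norm_smul]
    simp [mul_pow, sq_abs]
    try ring
  have hcomm : ⟪g x, d⟫ = ⟪d, g x⟫ := real_inner_comm _ _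
  nlinarith [sq_nonneg ‖μ • d + g x‖, hexp, h, hcomm, sq_nonneg ‖d‖, hμ0]
end helpers2

/-- One-step contraction of SGD under `L`-smoothness and `μ`-strong convexity
(Theorem 6 under Assumption 2): for an unbiased stochastic gradient `G` at `θ` with
variance at most `σ²` and step size `0 < α ≤ 1/L`,
`E[f (θ - α • G)] - f* ≤ (1 - α μ) (f θ - f*) + L α² σ² / 2`. -/
theorem sgd_one_step_contraction {Ω : Type*} [MeasurableSpace Ω]
    (P : Measure Ω) [IsProbabilityMeasure P]
    {E : Type*} [NormedAddCommGroup E] [InnerProductSpace ℝ E] [CompleteSpace E]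
    (f : E → ℝ) (g : E → E) (L : ℝ) (hL : 0 < L)
    (hdiff : ∀ x : E, HasGradientAt f (g x) x)
    (hlip : ∀ x y : E, ‖g x - g y‖ ≤ L * ‖x - y‖)
    (μ : ℝ) (hμ0 : 0 < μ) (hμL : μ ≤ L)
    (hconv : ConvexOn ℝ Set.univ (fun x : E => f x - μ / 2 * ‖x‖ ^ 2))
    (θstar : E) (fstar : ℝ) (hfstar : f θstar = fstar) (hlb : ∀ x : E, fstar ≤ f x)
    (θ : E) (α : ℝ) (hα0 : 0 < α) (hα : α ≤ 1 / L) (σ : ℝ) (hσ : 0 ≤ σ)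
    (G : Ω → E) (hG2 : MemLp G 2 P)
    (hmean : ∫ ω, G ω ∂P = g θ)
    (hvar : ∫ ω, ‖G ω - g θ‖ ^ 2 ∂P ≤ σ ^ 2) :
    (∫ ω, f (θ - α • G ω) ∂P) - fstar
      ≤ (1 - α * μ) * (f θ - fstar) + L * α ^ 2 * σ ^ 2 / 2 := by
  -- integrability facts
  have hGi : Integrable G P := hG2.integrable (by norm_num)
  have hGsq : Integrable (fun ω => ‖G ω‖ ^ 2) P := by
    have := hG2.integrable_norm_rpow two_ne_zero ENNReal.ofNat_ne_top
    convert this with ω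
    rw [show ((2:ENNReal)).toReal = ((2:ℕ):ℝ) by norm_num, Real.rpow_natCast]
  have hGmsq : Integrable (fun ω => ‖G ω - g θ‖ ^ 2) P := by
    have := (hG2.sub (memLp_const (g θ))).integrable_norm_rpow two_ne_zero ENNReal.ofNat_ne_top
    convert this with ω
    rw [show ((2:ENNReal)).toReal = ((2:ℕ):ℝ) by norm_num, Real.rpow_natCast]
    simp [Pi.sub_apply]
  have hinner : Integrable (fun ω => ⟪g θ, G ω⟫) P := hGi.const_inner _
  -- pointwise descent bound
  set U : Ω → ℝ := fun ω => f θ - α * ⟪g θ, G ω⟫ + L * α ^ 2 / 2 * ‖G ω‖ ^ 2 with hU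
  have hpt : ∀ ω, f (θ - α • G ω) ≤ U ω := by
    intro ω
    have h := sgd_descent hL hdiff hlip θ (-(α • G ω))
    rw [← sub_eq_add_neg] at h
    calc f (θ - α • G ω) ≤ f θ + ⟪g θ, -(α • G ω)⟫ + L / 2 * ‖-(α • G ω)‖ ^ 2 := h
      _ = U ω := by
        rw [inner_neg_right, real_inner_smul_right, norm_neg, norm_smul]
        simp [hU, mul_pow, abs_of_pos hα0]
        ring
  have hUint : Integrable U P :=
    ((integrable_const (f θ)).sub (hinner.const_mul α)).add (hGsq.const_mul _)
  -- integrability of the lhs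
  have hfmeas : AEStronglyMeasurable (fun ω => f (θ - α • G ω)) P := by
    have hcont : Continuous f := by
      apply continuous_iff_continuousAt.2
      exact fun x => (hdiff x).continuousAt
    exact hcont.comp_aestronglyMeasurable
      (aestronglyMeasurable_const.sub (hG2.aestronglyMeasurable.const_smul α))
  have hfint : Integrable (fun ω => f (θ - α • G ω)) P := by
    refine Integrable.mono' ((integrable_const |fstar|).add hUint.abs) hfmeas ?_
    filter_upwards with ω
    rw [Real.norm_eq_abs]
    simp only [Pi.add_apply]
    have h1 := hlb (θ - α • G ω)
    have h2 := hpt ω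
    have h3 : U ω ≤ |U ω| := le_abs_self _
    have h4 : -|fstar| ≤ fstar := neg_abs_le _
    rw [abs_le]
    constructor <;> [linarith [abs_nonneg (U ω)]; linarith [abs_nonneg fstar]]
  -- integral computations
  have e1 : ∫ ω, ⟪g θ, G ω⟫ ∂P = ‖g θ‖ ^ 2 := by
    rw [integral_inner hGi, hmean, real_inner_self_eq_norm_sq]
  have hint1a : Integrable (fun ω => α * ⟪g θ, G ω⟫) P := hinner.const_mul α
  have hint1 : Integrable (fun ω => f θ - α * ⟪g θ, G ω⟫) P :=
    (integrable_const (f θ)).sub hint1a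
  have hint2 : Integrable (fun ω => L * α ^ 2 / 2 * ‖G ω‖ ^ 2) P := hGsq.const_mul _
  have hIU : ∫ ω, U ω ∂P
      = f θ - α * ‖g θ‖ ^ 2 + L * α ^ 2 / 2 * ∫ ω, ‖G ω‖ ^ 2 ∂P := by
    rw [hU]
    rw [integral_add hint1 hint2, integral_sub (integrable_const (f θ)) hint1a,
      integral_const, integral_const_mul, integral_const_mul, e1]
    simp
  have hsecond : ∫ ω, ‖G ω‖ ^ 2 ∂P = (∫ ω, ‖G ω - g θ‖ ^ 2 ∂P) + ‖g θ‖ ^ 2 := by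
    have hptw : ∀ ω, ‖G ω‖ ^ 2
        = ‖G ω - g θ‖ ^ 2 + (2 * ⟪g θ, G ω⟫ - ‖g θ‖ ^ 2) := by
      intro ω
      have e := norm_add_sq_real (G ω - g θ) (g θ)
      rw [sub_add_cancel] at e
      have e3 : ⟪G ω - g θ, g θ⟫ = ⟪g θ, G ω⟫ - ‖g θ‖ ^ 2 := by
        rw [real_inner_comm, inner_sub_right, real_inner_self_eq_norm_sq]
      linarith [e, e3]
    calc ∫ ω, ‖G ω‖ ^ 2 ∂P
        = ∫ ω, (‖G ω - g θ‖ ^ 2 + (2 * ⟪g θ, G ω⟫ - ‖g θ‖ ^ 2)) ∂P := by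
          congr 1; funext ω; exact hptw ω
      _ = (∫ ω, ‖G ω - g θ‖ ^ 2 ∂P) + ((2 : ℝ) * ∫ ω, ⟪g θ, G ω⟫ ∂P - ‖g θ‖ ^ 2) := by
          have hB2 : Integrable (fun ω => (2:ℝ) * ⟪g θ, G ω⟫) P := hinner.const_mul 2
          have hB : Integrable (fun ω => (2:ℝ) * ⟪g θ, G ω⟫ - ‖g θ‖ ^ 2) P :=
            hB2.sub (integrable_const _)
          rw [integral_add hGmsq hB, integral_sub hB2 (integrable_const _),
            integral_const_mul, integral_const]
          simp
      _ = (∫ ω, ‖G ω - g θ‖ ^ 2 ∂P) + ‖g θ‖ ^ 2 := by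
          rw [e1]; ring
  -- bound the integral
  have hmain : ∫ ω, f (θ - α • G ω) ∂P ≤ ∫ ω, U ω ∂P :=
    integral_mono hfint hUint hpt
  have hpl := sgd_pl hμ0 hdiff hconv hfstar θ
  have hVnonneg : 0 ≤ ∫ ω, ‖G ω - g θ‖ ^ 2 ∂P :=
    integral_nonneg fun ω => sq_nonneg _
  have hLα : L * α ≤ 1 := by
    rw [div_eq_mul_inv, one_mul] at hα
    calc L * α ≤ L * L⁻¹ := by nlinarith
      _ = 1 := mul_inv_cancel₀ hL.ne'
  have hA : 0 ≤ ‖g θ‖ ^ 2 := sq_nonneg _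
  have hflb := hlb θ
  rw [hsecond] at hIU
  have h5 : L * α ^ 2 / 2 * (∫ ω, ‖G ω - g θ‖ ^ 2 ∂P) ≤ L * α ^ 2 / 2 * σ ^ 2 :=
    mul_le_mul_of_nonneg_left hvar (by positivity)
  have h6 : α / 2 * (2 * μ * (f θ - fstar)) ≤ α / 2 * ‖g θ‖ ^ 2 :=
    mul_le_mul_of_nonneg_left hpl (by positivity)
  have h7 : L * α * (α / 2 * ‖g θ‖ ^ 2) ≤ 1 * (α / 2 * ‖g θ‖ ^ 2) :=
    mul_le_mul_of_nonneg_right hLα (by positivity)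
  linarith [hmain, hIU, h5, h6, h7]
end
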